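/- arXiv:2007.15125 — 5 statements merged into one kernel-verified Lean document; each statement's English description precedes it below -/
import Mathlib

section
/- Let n ≥ 1, ε > 0, let F : [−1,1]^{n+1} → [−1,1]^n be any function, and define the valuations v_i(A) = (F_i(x(A)) + 1)/2 for i = 1,…,n. If (I^+, I^-) is a partition of [0,1] by at most n cuts such that |v_i(I^+) − v_i(I^-)| ≤ ε/2 for all i ∈ {1,…,n}, then the point y := x(I^+) satisfies max_j |y_j| = 1 (y lies on the boundary of [−1,1]^{n+1}) and ∥F(y) − F(−y)∥_∞ ≤ ε; that is, an (ε/2)-Consensus-Halving of v_1,…,v_n yields an ε-approximate Borsuk–Ulam point of F. -/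
open MeasureTheory Set

/-! The two pieces of a cut partition overlap only in the finitely many cut points, so
`λ(I⁻ ∩ R_j) = λ(R_j) − λ(I⁺ ∩ R_j)`, i.e. `x(I⁻) = −x(I⁺)`; the consensus condition
`|v_i(I⁺) − v_i(I⁻)| ≤ ε/2` is then exactly `|F_i(y) − F_i(−y)| ≤ ε`. Each of the `n`
interior cuts lies in the interior of at most one of the `n + 1` regions `R_j`, so some `R_j`
contains no cut in its interior and hence lies in a single piece, which makes `y_j = ±1`. -/

/-- The `j`-th of the `n+1` equal subintervals of `[0,1]`. -/
noncomputable def region (n : ℕ) (j : Fin (n + 1)) : Set ℝ :=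
  Icc ((j : ℝ) / ((n : ℝ) + 1)) (((j : ℝ) + 1) / ((n : ℝ) + 1))

/-- The point `x(A) ∈ [−1,1]^{n+1}` with `[x(A)]_j = 2(n+1)·λ(A ∩ R_j) − 1`. -/
noncomputable def xOf (n : ℕ) (A : Set ℝ) : Fin (n + 1) → ℝ :=
  fun j => 2 * ((n : ℝ) + 1) * (volume (A ∩ region n j)).toReal - 1

/-- The valuation `v_i(A) = (F_i(x(A)) + 1)/2`. -/
noncomputable def valOf (n : ℕ) (F : (Fin (n + 1) → ℝ) → Fin n → ℝ) (i : Fin n)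
    (A : Set ℝ) : ℝ :=
  (F (xOf n A) i + 1) / 2

/-- `(Ip, Im)` is a partition of `[0,1]` by at most `n` cuts. -/
def IsCutPartition (n : ℕ) (Ip Im : Set ℝ) : Prop :=
  ∃ (c : ℕ → ℝ) (S : Set ℕ),
    c 0 = 0 ∧ c (n + 1) = 1 ∧ (∀ k ≤ n, c k ≤ c (k + 1)) ∧
    Ip = ⋃ k ∈ {k | k ≤ n ∧ k ∈ S}, Icc (c k) (c (k + 1)) ∧
    Im = ⋃ k ∈ {k | k ≤ n ∧ k ∉ S}, Icc (c k) (c (k + 1))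

theorem exists_lt_forall_notMem_Ioo_div {m N : ℕ} (hNm : N < m) (p : ℕ → ℝ) :
    ∃ j < m, ∀ k < N, p k ∉ Ioo ((j : ℝ) / m) ((j + 1) / m) := by
  classical
  -- `p k` can only lie in the interval of index `⌊p k * m⌋₊`
  have hm : (0 : ℝ) < m := by exact_mod_cast N.zero_le.trans_lt hNm
  have hcard : ((Finset.range N).image fun k => ⌊p k * m⌋₊).card < (Finset.range m).card :=
    Finset.card_image_le.trans_lt (by simpa using hNm)
  obtain ⟨j, hj, hjs⟩ := Finset.exists_mem_notMem_of_card_lt_card hcard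
  refine ⟨j, Finset.mem_range.mp hj, fun k hk ⟨hjk, hkj⟩ => hjs ?_⟩
  rw [div_lt_iff₀ hm] at hjk
  rw [lt_div_iff₀ hm] at hkj
  refine Finset.mem_image.mpr ⟨k, Finset.mem_range.mpr hk, ?_⟩
  rw [Nat.floor_eq_iff (by linarith [j.cast_nonneg (α := ℝ)])]
  exact ⟨hjk.le, hkj⟩

section Cuts

variable {c : ℕ → ℝ} {n : ℕ}

theorem exists_Icc_subset_Icc_cuts {a b : ℝ} (ha : c 0 ≤ a) (hb : b ≤ c (n + 1))
    (hcuts : ∀ k < n, c (k + 1) ∉ Ioo a b) :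
    ∃ k ≤ n, Icc a b ⊆ Icc (c k) (c (k + 1)) := by
  classical
  set k := Nat.findGreatest (fun k => c k ≤ a) n
  have hka : c k ≤ a := Nat.findGreatest_spec (P := fun k => c k ≤ a) n.zero_le ha
  have hbk : b ≤ c (k + 1) := by
    rcases (Nat.findGreatest_le n : k ≤ n).lt_or_eq with hkn | hkn
    · have hak : a < c (k + 1) := lt_of_not_ge (Nat.findGreatest_is_greatest k.lt_succ_self hkn)
      by_contra! hkb
      exact hcuts k hkn ⟨hak, hkb⟩
    · rwa [show k = n from hkn]
  exact ⟨k, Nat.findGreatest_le n, Icc_subset_Icc hka hbk⟩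

theorem eq_of_mem_Icc_cuts_of_lt (hmono : ∀ k ≤ n, c k ≤ c (k + 1)) {x : ℝ} {l m : ℕ}
    (hl : x ∈ Icc (c l) (c (l + 1))) (hm : x ∈ Icc (c m) (c (m + 1))) (hlm : l < m)
    (hmn : m ≤ n) : x = c m := by
  have hc : MonotoneOn c (Iic (n + 1)) :=
    monotoneOn_of_le_succ ordConnected_Iic fun k _ _ hk => by
      rw [Order.succ_eq_add_one] at hk ⊢
      exact hmono k (by simpa using hk)
  have hcl : c (l + 1) ≤ c m := hc (by simp; omega) (by simp; omega) hlm
  exact le_antisymm (hl.2.trans hcl) hm.1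

variable {S : Set ℕ} {a b : ℝ}

theorem Icc_subset_biUnion_or (hc0 : c 0 = 0) (hc1 : c (n + 1) = 1) (ha : 0 ≤ a) (hb : b ≤ 1)
    (hcuts : ∀ k < n, c (k + 1) ∉ Ioo a b) :
    Icc a b ⊆ ⋃ k ∈ {k | k ≤ n ∧ k ∈ S}, Icc (c k) (c (k + 1)) ∨
      Icc a b ⊆ ⋃ k ∈ {k | k ≤ n ∧ k ∉ S}, Icc (c k) (c (k + 1)) := by
  obtain ⟨k, hkn, hk⟩ := exists_Icc_subset_Icc_cuts (hc0 ▸ ha) (hc1 ▸ hb) hcuts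
  have hpiece {T : Set ℕ} (hkT : k ∈ T) : Icc a b ⊆ ⋃ k ∈ T, Icc (c k) (c (k + 1)) :=
    hk.trans (subset_biUnion_of_mem (u := fun k => Icc (c k) (c (k + 1))) hkT)
  by_cases hkS : k ∈ S
  · exact .inl (hpiece ⟨hkn, hkS⟩)
  · exact .inr (hpiece ⟨hkn, hkS⟩)

end Cuts

theorem volume_real_region (n : ℕ) (j : Fin (n + 1)) :
    volume.real (region n j) = ((n : ℝ) + 1)⁻¹ := by
  rw [region, Real.volume_real_Icc, ← sub_div, add_sub_cancel_left, one_div,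
    max_eq_left (by positivity)]

theorem region_subset_Icc (n : ℕ) (j : Fin (n + 1)) : region n j ⊆ Icc 0 1 := by
  have hj : (j : ℝ) + 1 ≤ n + 1 := by exact_mod_cast j.isLt
  exact Icc_subset_Icc (by positivity) ((div_le_one (by positivity)).mpr hj)

namespace IsCutPartition

variable {n : ℕ} {Ip Im : Set ℝ}

theorem measurableSet_right (h : IsCutPartition n Ip Im) : MeasurableSet Im := by
  obtain ⟨c, S, -, -, -, -, rfl⟩ := h
  exact .biUnion (to_countable _) fun _ _ => measurableSet_Icc

theorem volume_inter_eq_zero (h : IsCutPartition n Ip Im) : volume (Ip ∩ Im) = 0 := by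
  obtain ⟨c, S, -, -, hmono, rfl, rfl⟩ := h
  refine measure_mono_null ?_ ((countable_range c).measure_zero _)
  rintro x ⟨hxp, hxm⟩
  obtain ⟨l, ⟨hl, hlS⟩, hxl⟩ := mem_iUnion₂.mp hxp
  obtain ⟨m, ⟨hm, hmS⟩, hxm⟩ := mem_iUnion₂.mp hxm
  rcases lt_or_gt_of_ne (show l ≠ m by rintro rfl; exact hmS hlS) with hlm | hml
  · exact ⟨m, (eq_of_mem_Icc_cuts_of_lt hmono hxl hxm hlm hm).symm⟩
  · exact ⟨l, (eq_of_mem_Icc_cuts_of_lt hmono hxm hxl hml hl).symm⟩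

theorem Icc_subset_union (h : IsCutPartition n Ip Im) : Icc 0 1 ⊆ Ip ∪ Im := by
  obtain ⟨c, S, hc0, hc1, -, rfl, rfl⟩ := h
  intro x hx
  have hcuts : ∀ k < n, c (k + 1) ∉ Ioo x x := by simp
  rcases Icc_subset_biUnion_or (S := S) hc0 hc1 hx.1 hx.2 hcuts with hp | hm
  · exact .inl (hp (left_mem_Icc.mpr le_rfl))
  · exact .inr (hm (left_mem_Icc.mpr le_rfl))

theorem exists_region_subset (h : IsCutPartition n Ip Im) :
    ∃ j, region n j ⊆ Ip ∨ region n j ⊆ Im := by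
  obtain ⟨c, S, hc0, hc1, -, rfl, rfl⟩ := h
  obtain ⟨j, hj, hcuts⟩ := exists_lt_forall_notMem_Ioo_div n.lt_succ_self (fun k => c (k + 1))
  have hj' : (j : ℝ) + 1 ≤ n + 1 := by exact_mod_cast hj
  push_cast at hcuts
  exact ⟨⟨j, hj⟩, Icc_subset_biUnion_or hc0 hc1 (by positivity)
    ((div_le_one (by positivity)).mpr hj') hcuts⟩

end IsCutPartition

theorem abs_xOf_le_one (n : ℕ) (A : Set ℝ) (j : Fin (n + 1)) : |xOf n A j| ≤ 1 := by
  have hle : volume.real (A ∩ region n j) ≤ ((n : ℝ) + 1)⁻¹ :=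
    volume_real_region n j ▸ measureReal_mono inter_subset_right measure_Icc_lt_top.ne
  have hpos : (0 : ℝ) < n + 1 := by positivity
  have key : ((n : ℝ) + 1) * volume.real (A ∩ region n j) ≤ 1 := by
    rwa [← le_div_iff₀' hpos, one_div]
  have hnonneg : 0 ≤ ((n : ℝ) + 1) * volume.real (A ∩ region n j) :=
    mul_nonneg hpos.le measureReal_nonneg
  rw [xOf, ← measureReal_def, abs_le]
  constructor <;> linarith

theorem xOf_eq_one_of_region_subset {n : ℕ} {A : Set ℝ} {j : Fin (n + 1)}
    (h : region n j ⊆ A) : xOf n A j = 1 := by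
  have hA : (volume (A ∩ region n j)).toReal = ((n : ℝ) + 1)⁻¹ := by
    rw [inter_eq_self_of_subset_right h, ← measureReal_def, volume_real_region]
  rw [xOf, hA]
  field_simp
  norm_num

theorem measureReal_inter_add_inter {α : Type*} [MeasurableSpace α] {μ : Measure α}
    {A B R : Set α} (hB : MeasurableSet B) (hR : MeasurableSet R) (hAB : μ (A ∩ B) = 0)
    (hRAB : R ⊆ A ∪ B) (hμR : μ R ≠ ⊤) :
    μ.real (A ∩ R) + μ.real (B ∩ R) = μ.real R := by
  have hunion : (A ∩ R) ∪ (B ∩ R) = R := by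
    rw [← union_inter_distrib_right, inter_eq_self_of_subset_right hRAB]
  have hinter : μ.real ((A ∩ R) ∩ (B ∩ R)) = 0 :=
    measureReal_mono_null (inter_subset_inter inter_subset_left inter_subset_left)
      (by rw [measureReal_def, hAB, ENNReal.toReal_zero]) (by simp [hAB])
  have hfin {T : Set α} : μ (T ∩ R) ≠ ⊤ := measure_ne_top_of_subset inter_subset_right hμR
  rw [← measureReal_union_add_inter (hB.inter hR) hfin hfin, hunion, hinter, add_zero]

theorem xOf_eq_neg_xOf {n : ℕ} {A B : Set ℝ} (hB : MeasurableSet B)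
    (hcover : Icc 0 1 ⊆ A ∪ B) (hAB : volume (A ∩ B) = 0) : xOf n B = -xOf n A := by
  funext j
  have hsum := measureReal_inter_add_inter (R := region n j) hB measurableSet_Icc hAB
    ((region_subset_Icc n j).trans hcover) measure_Icc_lt_top.ne
  rw [volume_real_region] at hsum
  simp only [xOf, Pi.neg_apply, ← measureReal_def]
  rw [← sub_eq_of_eq_add' hsum.symm]
  field_simp
  ring

theorem valOf_sub_valOf (n : ℕ) (F : (Fin (n + 1) → ℝ) → Fin n → ℝ) (i : Fin n)
    (A B : Set ℝ) :
    valOf n F i A - valOf n F i B = (F (xOf n A) i - F (xOf n B) i) / 2 := by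
  simp only [valOf]
  ring

theorem stmt4_general (n : ℕ) (ε : ℝ) (hε : 0 < ε)
    (F : (Fin (n + 1) → ℝ) → Fin n → ℝ)
    (Ip Im : Set ℝ) (hpart : IsCutPartition n Ip Im)
    (happrox : ∀ i : Fin n, |valOf n F i Ip - valOf n F i Im| ≤ ε / 2) :
    (∀ j, |xOf n Ip j| ≤ 1) ∧ (∃ j : Fin (n + 1), |xOf n Ip j| = 1) ∧
      ‖F (xOf n Ip) - F (-(xOf n Ip))‖ ≤ ε := by
  have hneg : xOf n Im = -xOf n Ip :=
    xOf_eq_neg_xOf hpart.measurableSet_right hpart.Icc_subset_union hpart.volume_inter_eq_zero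
  refine ⟨abs_xOf_le_one n Ip, ?_, ?_⟩
  · obtain ⟨j, hj | hj⟩ := hpart.exists_region_subset
    · exact ⟨j, by rw [xOf_eq_one_of_region_subset hj, abs_one]⟩
    · have hIm := xOf_eq_one_of_region_subset hj
      rw [hneg, Pi.neg_apply, neg_eq_iff_eq_neg] at hIm
      exact ⟨j, by rw [hIm, abs_neg, abs_one]⟩
  · rw [← hneg, pi_norm_le_iff_of_nonneg hε.le]
    intro i
    have hi := happrox i
    rw [valOf_sub_valOf, abs_div, abs_two] at hi
    rw [Pi.sub_apply, Real.norm_eq_abs]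
    linarith

/-- An `(ε/2)`-Consensus-Halving of the valuations `v_1, …, v_n` derived from any function
`F` yields a boundary point `y = x(I⁺)` of `[−1,1]^{n+1}` with `‖F(y) − F(−y)‖_∞ ≤ ε`. -/
theorem stmt4 (n : ℕ) (hn : 1 ≤ n) (ε : ℝ) (hε : 0 < ε)
    (F : (Fin (n + 1) → ℝ) → Fin n → ℝ)
    (Ip Im : Set ℝ) (hpart : IsCutPartition n Ip Im)
    (happrox : ∀ i : Fin n, |valOf n F i Ip - valOf n F i Im| ≤ ε / 2) :
    (∀ j, |xOf n Ip j| ≤ 1) ∧ (∃ j : Fin (n + 1), |xOf n Ip j| = 1) ∧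
      ‖F (xOf n Ip) - F (-(xOf n Ip))‖ ≤ ε :=
  stmt4_general n ε hε F Ip Im hpart happrox
end

section
/- For every n ≥ 1 and all x, y ∈ [−1,1]^n, the painting encodings satisfy λ(I^+(x) △ I^+(y)) ≤ Σ_{ℓ=1}^n |x_ℓ − y_ℓ| (in particular λ(I^+(x) △ I^+(y)) ≤ n·∥x − y∥_∞), where λ is Lebesgue measure and △ the symmetric difference. -/
/-!
At a height `t > 0`, membership in `I⁺(x)` depends only on the labels that the coordinates
`x ℓ` write at height `t` (`sign (x ℓ)` if `t ≤ |x ℓ|`, none otherwise). So `I⁺(x) △ I⁺(y)` is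
covered by the heights where some coordinate writes different labels for `x` and `y`. For one
coordinate these heights lie between `|x ℓ|` and `|y ℓ|` if the signs agree, and in
`(0, max |x ℓ| |y ℓ|]` if they differ; either way they form a set of measure `≤ |x ℓ - y ℓ|`.
-/

open MeasureTheory Set

/-- The painting encoding `I⁺(x) ⊆ [0,1]` of a point `x ∈ [−1,1]^n`: `0 ∈ I⁺(x)`, and
`t ∈ (0,1]` belongs to `I⁺(x)` iff either no index `ℓ` satisfies `|x_ℓ| ≥ t`, or the
largest such index `ℓ*` satisfies `x_{ℓ*} > 0`. -/
def paintPlus (n : ℕ) (x : Fin n → ℝ) : Set ℝ :=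
  {t | t = 0 ∨ (0 < t ∧ t ≤ 1 ∧
    ((∀ ℓ : Fin n, |x ℓ| < t) ∨
      ∃ ℓ : Fin n, t ≤ |x ℓ| ∧ 0 < x ℓ ∧ ∀ m : Fin n, ℓ < m → |x m| < t))}

noncomputable def stroke (a t : ℝ) : SignType := if t ≤ |a| then SignType.sign a else 0

lemma stroke_of_lt {a t : ℝ} (h : |a| < t) : stroke a t = 0 := if_neg h.not_ge

lemma stroke_eq_zero_iff {a t : ℝ} (ht : 0 < t) : stroke a t = 0 ↔ |a| < t := by
  by_cases h : t ≤ |a|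
  · rw [stroke, if_pos h]
    exact iff_of_false (sign_ne_zero.mpr (abs_pos.mp (ht.trans_le h))) h.not_gt
  · exact iff_of_true (stroke_of_lt (not_le.mp h)) (not_le.mp h)

lemma stroke_eq_one_iff {a t : ℝ} : stroke a t = 1 ↔ t ≤ |a| ∧ 0 < a := by
  unfold stroke
  split_ifs with h <;> simp [h, sign_eq_one_iff]

lemma mem_paintPlus_iff {n : ℕ} {x : Fin n → ℝ} {t : ℝ} :
    t ∈ paintPlus n x ↔ t = 0 ∨ (0 < t ∧ t ≤ 1 ∧ ((∀ ℓ, stroke (x ℓ) t = 0) ∨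
      ∃ ℓ, stroke (x ℓ) t = 1 ∧ ∀ m, ℓ < m → stroke (x m) t = 0)) := by
  refine or_congr_right (and_congr_right fun ht => ?_)
  simp only [stroke_eq_zero_iff ht, stroke_eq_one_iff, and_assoc]

lemma mem_paintPlus_congr {n : ℕ} {x y : Fin n → ℝ} {t : ℝ}
    (h : 0 < t → ∀ ℓ, stroke (x ℓ) t = stroke (y ℓ) t) :
    t ∈ paintPlus n x ↔ t ∈ paintPlus n y := by
  rcases le_or_gt t 0 with ht | ht
  · simp [mem_paintPlus_iff, ht.not_gt]
  · simp only [mem_paintPlus_iff, h ht]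

lemma symmDiff_paintPlus_subset {n : ℕ} (x y : Fin n → ℝ) :
    symmDiff (paintPlus n x) (paintPlus n y) ⊆
      ⋃ ℓ, {t | 0 < t ∧ stroke (x ℓ) t ≠ stroke (y ℓ) t} := by
  intro t ht
  by_contra hU
  simp only [mem_iUnion, mem_ofPred_eq, not_exists, not_and, not_not] at hU
  have hmem := mem_paintPlus_congr (x := x) (y := y) fun ht ℓ => hU ℓ ht
  simp [mem_symmDiff, hmem] at ht

lemma max_abs_le_abs_sub_of_mul_nonpos {a b : ℝ} (h : a * b ≤ 0) : max |a| |b| ≤ |a - b| := by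
  refine max_le ?_ ?_ <;>
    cases abs_cases a <;> cases abs_cases b <;> cases abs_cases (a - b) <;> nlinarith

lemma volume_stroke_ne_le (a b : ℝ) :
    volume {t | 0 < t ∧ stroke a t ≠ stroke b t} ≤ ENNReal.ofReal |a - b| := by
  by_cases hs : SignType.sign a = SignType.sign b
  · have hsub : {t | 0 < t ∧ stroke a t ≠ stroke b t} ⊆ Ioc (min |a| |b|) (max |a| |b|) := by
      rintro t ⟨-, hne⟩
      by_contra hI
      rw [mem_Ioc, not_and_or, not_lt, not_le, le_min_iff, max_lt_iff] at hI
      rcases hI with ⟨ha, hb⟩ | ⟨ha, hb⟩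
      · exact hne (by simp only [stroke, if_pos ha, if_pos hb, hs])
      · exact hne (by rw [stroke_of_lt ha, stroke_of_lt hb])
    calc volume {t | 0 < t ∧ stroke a t ≠ stroke b t}
        ≤ volume (Ioc (min |a| |b|) (max |a| |b|)) := measure_mono hsub
      _ = ENNReal.ofReal |(|a| - |b|)| := by rw [Real.volume_Ioc, max_sub_min_eq_abs']
      _ ≤ ENNReal.ofReal |a - b| := ENNReal.ofReal_le_ofReal (abs_abs_sub_abs_le_abs_sub a b)
  · have hsub : {t | 0 < t ∧ stroke a t ≠ stroke b t} ⊆ Ioc 0 (max |a| |b|) := by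
      rintro t ⟨ht, hne⟩
      refine ⟨ht, not_lt.mp fun h => hne ?_⟩
      rw [max_lt_iff] at h
      rw [stroke_of_lt h.1, stroke_of_lt h.2]
    have hab : a * b ≤ 0 := by
      by_contra! h
      rcases mul_pos_iff.mp h with ⟨ha, hb⟩ | ⟨ha, hb⟩
      · exact hs (by rw [sign_pos ha, sign_pos hb])
      · exact hs (by rw [sign_neg ha, sign_neg hb])
    calc volume {t | 0 < t ∧ stroke a t ≠ stroke b t}
        ≤ volume (Ioc 0 (max |a| |b|)) := measure_mono hsub
      _ = ENNReal.ofReal (max |a| |b|) := by rw [Real.volume_Ioc, sub_zero]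
      _ ≤ ENNReal.ofReal |a - b| := ENNReal.ofReal_le_ofReal (max_abs_le_abs_sub_of_mul_nonpos hab)

lemma volume_symmDiff_paintPlus_le {n : ℕ} (x y : Fin n → ℝ) :
    volume (symmDiff (paintPlus n x) (paintPlus n y)) ≤ ENNReal.ofReal (∑ ℓ, |x ℓ - y ℓ|) :=
  calc volume (symmDiff (paintPlus n x) (paintPlus n y))
      ≤ volume (⋃ ℓ, {t | 0 < t ∧ stroke (x ℓ) t ≠ stroke (y ℓ) t}) :=
        measure_mono (symmDiff_paintPlus_subset x y)
    _ ≤ ∑ ℓ, volume {t | 0 < t ∧ stroke (x ℓ) t ≠ stroke (y ℓ) t} := measure_iUnion_fintype_le _ _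
    _ ≤ ∑ ℓ, ENNReal.ofReal |x ℓ - y ℓ| :=
        Finset.sum_le_sum fun ℓ _ => volume_stroke_ne_le (x ℓ) (y ℓ)
    _ = ENNReal.ofReal (∑ ℓ, |x ℓ - y ℓ|) :=
        (ENNReal.ofReal_sum_of_nonneg fun _ _ => abs_nonneg _).symm

theorem stmt7_general (n : ℕ) (x y : Fin n → ℝ) :
    (volume (symmDiff (paintPlus n x) (paintPlus n y))).toReal ≤ ∑ ℓ, |x ℓ - y ℓ| ∧
    (volume (symmDiff (paintPlus n x) (paintPlus n y))).toReal ≤ (n : ℝ) * ‖x - y‖ := by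
  have hsum := ENNReal.toReal_le_of_le_ofReal (Finset.sum_nonneg fun _ _ => abs_nonneg _)
    (volume_symmDiff_paintPlus_le x y)
  refine ⟨hsum, hsum.trans ?_⟩
  simpa [Real.norm_eq_abs] using Pi.sum_norm_apply_le_norm (x - y)

/-- The painting encodings satisfy
`λ(I⁺(x) △ I⁺(y)) ≤ Σ_ℓ |x_ℓ − y_ℓ|`, and in particular `≤ n·‖x − y‖_∞`. -/
theorem stmt7 (n : ℕ) (hn : 1 ≤ n) (x y : Fin n → ℝ)
    (hx : ∀ ℓ, x ℓ ∈ Icc (-1:ℝ) 1) (hy : ∀ ℓ, y ℓ ∈ Icc (-1:ℝ) 1) :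
    (volume (symmDiff (paintPlus n x) (paintPlus n y))).toReal ≤ ∑ ℓ, |x ℓ - y ℓ| ∧
    (volume (symmDiff (paintPlus n x) (paintPlus n y))).toReal ≤ (n : ℝ) * ‖x - y‖ :=
  stmt7_general n x y
end

section
/- Let n ≥ 1 and δ > 0. Let w^0, w^1, …, w^n ∈ ℝ^n be vectors where each w^k = δ·n·σ_k·e_{j_k} for some coordinate index j_k ∈ {1,…,n} and sign σ_k ∈ {−1,+1}, and suppose no coordinate occurs with both signs (if j_k = j_{k'} then σ_k = σ_{k'}). Then every convex combination v = Σ_{k=0}^n α_k·w^k (with α_k ≥ 0 and Σ_k α_k = 1) satisfies ∥v∥_1 = δ·n, and consequently ∥v∥_∞ ≥ δ. (This is the claim that a Kuhn simplex whose vertex labels contain no two opposite labels has interpolated value of sup norm at least δ.) -/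
open Set

/-- Kuhn simplex interpolation claim: if `w^0, …, w^n ∈ ℝ^n`, with `w^k = δ·n·σ_k·e_{j_k}`
where no coordinate occurs with both signs, then every convex combination `v` of the `w^k`
has `‖v‖₁ = δ·n`, and consequently `‖v‖_∞ ≥ δ`. -/
theorem stmt10 (n : ℕ) (hn : 1 ≤ n) (δ : ℝ) (hδ : 0 < δ)
    (j : Fin (n + 1) → Fin n) (σ : Fin (n + 1) → ℝ)
    (hσ : ∀ k, σ k = 1 ∨ σ k = -1)
    (hcons : ∀ k k', j k = j k' → σ k = σ k')
    (w : Fin (n + 1) → Fin n → ℝ)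
    (hw : ∀ k, w k = (δ * (n : ℝ) * σ k) • (Pi.single (j k) (1 : ℝ) : Fin n → ℝ))
    (α : Fin (n + 1) → ℝ) (hα : ∀ k, 0 ≤ α k) (hsum : ∑ k, α k = 1)
    (v : Fin n → ℝ) (hv : v = ∑ k, α k • w k) :
    (∑ i, |v i|) = δ * (n : ℝ) ∧ δ ≤ ‖v‖ := by
  set f : Fin n → ℝ := fun i => ∑ k, if j k = i then α k else 0 with hf
  have hvi : ∀ i, v i = ∑ k, if j k = i then α k * (δ * n * σ k) else 0 := by
    intro i
    rw [hv]
    simp only [Finset.sum_apply, Pi.smul_apply]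
    refine Finset.sum_congr rfl fun k _ => ?_
    rw [hw k]
    by_cases h : j k = i
    · simp [h, mul_comm]
    · simp [h, Pi.single_apply, Ne.symm h]
  have hfnn : ∀ i, 0 ≤ f i := by
    intro i
    apply Finset.sum_nonneg
    intro k _
    by_cases h : j k = i <;> simp [h, hα k]
  have hδn : (0:ℝ) ≤ δ * n := by positivity
  have habs : ∀ i, |v i| = δ * n * f i := by
    intro i
    by_cases hex : ∃ k, j k = i
    · obtain ⟨k0, hk0⟩ := hex
      have : v i = (δ * n * σ k0) * f i := by
        rw [hvi, hf, Finset.mul_sum]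
        refine Finset.sum_congr rfl fun k _ => ?_
        by_cases h : j k = i
        · have : σ k = σ k0 := hcons k k0 (by rw [h, hk0])
          simp [h, this]; ring
        · simp [h]
      rw [this, abs_mul, abs_mul, abs_mul]
      have : |σ k0| = 1 := by rcases hσ k0 with h | h <;> simp [h]
      rw [this, abs_of_nonneg hδ.le, abs_of_nonneg (Nat.cast_nonneg n),
        abs_of_nonneg (hfnn i), mul_one]
    · push_neg at hex
      have h1 : v i = 0 := by
        rw [hvi]; exact Finset.sum_eq_zero fun k _ => by simp [hex k]
      have h2 : f i = 0 := by
        rw [hf]; exact Finset.sum_eq_zero fun k _ => by simp [hex k]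
      simp [h1, h2]
  have hsumf : ∑ i, f i = 1 := by
    rw [hf]
    rw [Finset.sum_comm]
    rw [← hsum]
    refine Finset.sum_congr rfl fun k _ => ?_
    simp
  have key : (∑ i, |v i|) = δ * n := by
    calc ∑ i, |v i| = ∑ i, δ * n * f i := Finset.sum_congr rfl fun i _ => habs i
    _ = δ * n * ∑ i, f i := by rw [Finset.mul_sum]
    _ = δ * n := by rw [hsumf, mul_one]
  refine ⟨key, ?_⟩
  have hle : ∑ i, |v i| ≤ n * ‖v‖ := by
    calc ∑ i, |v i| ≤ ∑ _i : Fin n, ‖v‖ := by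
          refine Finset.sum_le_sum fun i _ => ?_
          have := norm_le_pi_norm v i
          simpa using this
    _ = n * ‖v‖ := by simp [Finset.sum_const, mul_comm]
  have hn' : (0:ℝ) < n := by exact_mod_cast hn
  rw [key] at hle
  nlinarith [hle]
end

section
/- Let n ≥ 1, K ≥ 0, and let h : [−1,1]^n → [−1,1]^n satisfy ∥h(x') − h(y')∥_∞ ≤ K·∥x' − y'∥_∞ for all x', y' ∈ [−1,1]^n and h(−x') = −h(x') for every x' on the boundary of [−1,1]^n. Define F : [−1,1]^{n+1} → ℝ^n by F(x', t) = ((1+t)/2)·h(x') − ((1−t)/2)·h(−x') for x' ∈ [−1,1]^n and t ∈ [−1,1]. Then: (i) F takes values in [−1,1]^n; (ii) F(−x) = −F(x) for all x = (x', t) ∈ [−1,1]^{n+1}; (iii) for every (x', t) on the boundary of [−1,1]^{n+1} with t ≥ 0, F(x', t) = h(x'); and (iv) ∥F(x) − F(y)∥_∞ ≤ (K + 1)·∥x − y∥_∞ for all x, y ∈ [−1,1]^{n+1}. -/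
open Set

lemma stmt11_aux {n : ℕ} {v : Fin n → ℝ} (hv : ∀ i, v i ∈ Icc (-1:ℝ) 1) : ‖v‖ ≤ 1 := by
  rw [pi_norm_le_iff_of_nonneg zero_le_one]
  intro i
  rw [Real.norm_eq_abs, abs_le]
  exact ⟨(hv i).1, (hv i).2⟩

/-- Properties of the extension `F(x', t) = ((1+t)/2)·h(x') − ((1−t)/2)·h(−x')` of a
function `h : [−1,1]^n → [−1,1]^n` that is `K`-Lipschitz (sup norm) and odd on the
boundary of `[−1,1]^n`:
(i) `F` takes values in `[−1,1]^n`; (ii) `F(−x) = −F(x)`;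
(iii) on the boundary of `[−1,1]^{n+1}` with `t ≥ 0`, `F(x', t) = h(x')`;
(iv) `F` is `(K+1)`-Lipschitz w.r.t. the sup norm `max(‖x'−y'‖_∞, |s−t|)`. -/
theorem stmt11 (n : ℕ) (hn : 1 ≤ n) (K : ℝ) (hK : 0 ≤ K)
    (h : (Fin n → ℝ) → Fin n → ℝ)
    (hmap : ∀ x : Fin n → ℝ, (∀ i, x i ∈ Icc (-1:ℝ) 1) → ∀ i, h x i ∈ Icc (-1:ℝ) 1)
    (hlip : ∀ x y : Fin n → ℝ, (∀ i, x i ∈ Icc (-1:ℝ) 1) → (∀ i, y i ∈ Icc (-1:ℝ) 1) →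
      ‖h x - h y‖ ≤ K * ‖x - y‖)
    (hodd : ∀ x : Fin n → ℝ, (∀ i, x i ∈ Icc (-1:ℝ) 1) → (∃ i, |x i| = 1) →
      h (-x) = -(h x))
    (F : (Fin n → ℝ) → ℝ → Fin n → ℝ)
    (hF : ∀ x t, F x t = ((1 + t) / 2) • h x - ((1 - t) / 2) • h (-x)) :
    (∀ (x : Fin n → ℝ) (t : ℝ), (∀ i, x i ∈ Icc (-1:ℝ) 1) → t ∈ Icc (-1:ℝ) 1 →
      ∀ i, F x t i ∈ Icc (-1:ℝ) 1) ∧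
    (∀ (x : Fin n → ℝ) (t : ℝ), (∀ i, x i ∈ Icc (-1:ℝ) 1) → t ∈ Icc (-1:ℝ) 1 →
      F (-x) (-t) = -(F x t)) ∧
    (∀ (x : Fin n → ℝ) (t : ℝ), (∀ i, x i ∈ Icc (-1:ℝ) 1) → t ∈ Icc (-1:ℝ) 1 →
      ((∃ i, |x i| = 1) ∨ |t| = 1) → 0 ≤ t → F x t = h x) ∧
    (∀ (x y : Fin n → ℝ) (s t : ℝ), (∀ i, x i ∈ Icc (-1:ℝ) 1) →
      (∀ i, y i ∈ Icc (-1:ℝ) 1) → s ∈ Icc (-1:ℝ) 1 → t ∈ Icc (-1:ℝ) 1 →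
      ‖F x s - F y t‖ ≤ (K + 1) * max ‖x - y‖ |s - t|) := by
  have hnegmem : ∀ x : Fin n → ℝ, (∀ i, x i ∈ Icc (-1:ℝ) 1) →
      (∀ i, (-x) i ∈ Icc (-1:ℝ) 1) := by
    intro x hx i
    have := hx i
    simp only [Pi.neg_apply, mem_Icc] at *
    constructor <;> linarith [this.1, this.2]
  refine ⟨?_, ?_, ?_, ?_⟩
  · -- (i)
    intro x t hx ht i
    have h1 := hmap x hx i
    have h2 := hmap (-x) (hnegmem x hx) i
    rw [hF]
    simp only [Pi.sub_apply, Pi.smul_apply, smul_eq_mul, mem_Icc] at *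
    obtain ⟨ht1, ht2⟩ := ht
    have ha : (0:ℝ) ≤ (1 + t) / 2 := by linarith
    have hb : (0:ℝ) ≤ (1 - t) / 2 := by linarith
    constructor <;> nlinarith [h1.1, h1.2, h2.1, h2.2]
  · -- (ii)
    intro x t hx ht
    rw [hF, hF, neg_neg]
    have : (1 + -t) / 2 = (1 - t) / 2 := by ring
    rw [this]
    have : (1 - -t) / 2 = (1 + t) / 2 := by ring
    rw [this]
    abel
  · -- (iii)
    intro x t hx ht hb ht0
    rcases hb with hb | hb
    · have ho := hodd x hx hb
      rw [hF, ho]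
      have : ((1 + t) / 2) • h x - ((1 - t) / 2) • (-(h x)) = ((1+t)/2 + (1-t)/2) • h x := by
        module
      rw [this, show (1 + t) / 2 + (1 - t) / 2 = 1 by ring, one_smul]
    · have : t = 1 := by
        rcases abs_eq (by norm_num : (0:ℝ) ≤ 1) |>.mp hb with h1 | h1
        · exact h1
        · linarith
      subst this
      rw [hF]
      norm_num
  · -- (iv)
    intro x y s t hx hy hs ht
    have hym := hnegmem y hy
    have hxm := hnegmem x hx
    obtain ⟨hs1, hs2⟩ := hs
    obtain ⟨ht1, ht2⟩ := ht
    have key1 : F x s - F y s = ((1 + s) / 2) • (h x - h y) - ((1 - s) / 2) • (h (-x) - h (-y)) := by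
      rw [hF, hF]; module
    have key2 : F y s - F y t = ((s - t) / 2) • (h y + h (-y)) := by
      rw [hF, hF]; module
    have hn1 : ‖F x s - F y s‖ ≤ K * ‖x - y‖ := by
      rw [key1]
      calc ‖((1 + s) / 2) • (h x - h y) - ((1 - s) / 2) • (h (-x) - h (-y))‖
          ≤ ‖((1 + s) / 2) • (h x - h y)‖ + ‖((1 - s) / 2) • (h (-x) - h (-y))‖ :=
            norm_sub_le _ _
        _ = |(1 + s) / 2| * ‖h x - h y‖ + |(1 - s) / 2| * ‖h (-x) - h (-y)‖ := by
            rw [norm_smul, norm_smul, Real.norm_eq_abs, Real.norm_eq_abs]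
        _ ≤ ((1 + s) / 2) * (K * ‖x - y‖) + ((1 - s) / 2) * (K * ‖x - y‖) := by
            have e1 : |(1 + s) / 2| = (1 + s) / 2 := abs_of_nonneg (by linarith)
            have e2 : |(1 - s) / 2| = (1 - s) / 2 := abs_of_nonneg (by linarith)
            rw [e1, e2]
            have l1 := hlip x y hx hy
            have l2 := hlip (-x) (-y) hxm hym
            have e3 : ‖(-x) - (-y)‖ = ‖x - y‖ := by
              rw [show (-x) - (-y) = -(x - y) by abel, norm_neg]
            rw [e3] at l2
            gcongr <;> linarith
        _ = K * ‖x - y‖ := by ring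
    have hn2 : ‖F y s - F y t‖ ≤ |s - t| := by
      rw [key2, norm_smul, Real.norm_eq_abs]
      have : ‖h y + h (-y)‖ ≤ 2 := by
        calc ‖h y + h (-y)‖ ≤ ‖h y‖ + ‖h (-y)‖ := norm_add_le _ _
          _ ≤ 1 + 1 := add_le_add (stmt11_aux (hmap y hy)) (stmt11_aux (hmap (-y) hym))
          _ = 2 := by norm_num
      calc |(s - t) / 2| * ‖h y + h (-y)‖ ≤ |(s - t) / 2| * 2 := by
            gcongr
        _ = |s - t| := by rw [abs_div, abs_two]; ring
    calc ‖F x s - F y t‖ ≤ ‖F x s - F y s‖ + ‖F y s - F y t‖ := by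
          have : F x s - F y t = (F x s - F y s) + (F y s - F y t) := by abel
          rw [this]; exact norm_add_le _ _
      _ ≤ K * ‖x - y‖ + |s - t| := add_le_add hn1 hn2
      _ ≤ K * max ‖x - y‖ |s - t| + 1 * max ‖x - y‖ |s - t| := by
          gcongr
          · exact le_max_left _ _
          · rw [one_mul]; exact le_max_right _ _
      _ = (K + 1) * max ‖x - y‖ |s - t| := by ring
end

section
/- Let n ≥ 1, m ≥ 1, K ≥ 0, and let H be a function from the hyperplane {z ∈ ℝ^{n+1} : S(z) = 0} to [−1,1]^m satisfying ∥H(z) − H(w)∥_∞ ≤ K·∥z − w∥_∞ for all z, w in the hyperplane and H(−z) = −H(z). Let C ≥ 1 + (n+1)·K and define F' : [−1,1]^{n+1} → ℝ^m by F'(x) = (1 − |S(x)|/(n+1))·H(Π(x)) + C·(S(x)/(n+1))·𝟙_m, where 𝟙_m ∈ ℝ^m is the all-ones vector. Then: (i) F'(−x) = −F'(x) for all x ∈ [−1,1]^{n+1}; (ii) F' is monotone, i.e., F'(x) ≤ F'(y) coordinatewise whenever x, y ∈ [−1,1]^{n+1} satisfy x ≤ y coordinatewise; and (iii) ∥F'(x)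 − F'(y)∥_∞ ≤ (1 + √(n+1)·K + C)·∥x − y∥_∞ for all x, y ∈ [−1,1]^{n+1}. -/
open Set

/-- `S(x) = Σ_i x_i`. -/
noncomputable def Ssum (n : ℕ) (x : Fin (n + 1) → ℝ) : ℝ := ∑ i, x i

/-- The orthogonal projection `Π(x) = x − (S(x)/(n+1))·𝟙` onto the hyperplane `{S = 0}`. -/
noncomputable def projD (n : ℕ) (x : Fin (n + 1) → ℝ) : Fin (n + 1) → ℝ :=
  fun i => x i - Ssum n x / ((n : ℝ) + 1)

/-!
Oddness is inherited from `H` and `Π`. If `x ≤ y` and `δ = S(y) - S(x)`, then `Π y - Π x` has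
sup norm at most `δ`, so the first summand of `F'` drops by at most `(1 + (n+1)K) δ/(n+1)` while
the second rises by `C δ/(n+1)`: this is where `C ≥ 1 + (n+1)K` enters. The Lipschitz bound uses
that `Π` is an orthogonal projection, hence an `ℓ²`-contraction, and `‖z‖_∞ ≤ ‖z‖₂ ≤ √(n+1) ‖z‖_∞`.
-/

lemma norm_le_one_of_forall_mem_Icc {ι : Type*} [Fintype ι] {x : ι → ℝ}
    (hx : ∀ i, x i ∈ Icc (-1 : ℝ) 1) : ‖x‖ ≤ 1 :=
  (pi_norm_le_iff_of_nonneg zero_le_one).2 fun i => abs_le.2 (hx i)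

lemma abs_apply_le_norm {ι : Type*} [Fintype ι] (x : ι → ℝ) (i : ι) : |x i| ≤ ‖x‖ :=
  norm_le_pi_norm x i

section Ssum

variable {n : ℕ}

lemma Ssum_neg (x : Fin (n + 1) → ℝ) : Ssum n (-x) = -Ssum n x := by
  simp [Ssum]

lemma Ssum_sub (x y : Fin (n + 1) → ℝ) : Ssum n (x - y) = Ssum n x - Ssum n y := by
  simp [Ssum]

lemma Ssum_mono {x y : Fin (n + 1) → ℝ} (hxy : ∀ i, x i ≤ y i) : Ssum n x ≤ Ssum n y :=
  Finset.sum_le_sum fun i _ => hxy i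

lemma apply_le_Ssum {x : Fin (n + 1) → ℝ} (hx : ∀ i, 0 ≤ x i) (i : Fin (n + 1)) :
    x i ≤ Ssum n x :=
  Finset.single_le_sum (fun k _ => hx k) (Finset.mem_univ i)

lemma abs_Ssum_le (x : Fin (n + 1) → ℝ) : |Ssum n x| ≤ ((n : ℝ) + 1) * ‖x‖ :=
  calc |Ssum n x| ≤ ∑ i, |x i| := Finset.abs_sum_le_sum_abs _ _
    _ ≤ ∑ _i : Fin (n + 1), ‖x‖ := Finset.sum_le_sum fun i _ => abs_apply_le_norm x i
    _ = ((n : ℝ) + 1) * ‖x‖ := by simp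

end Ssum

section projD

variable {n : ℕ}

lemma Ssum_projD (x : Fin (n + 1) → ℝ) : Ssum n (projD n x) = 0 := by
  simp only [Ssum, projD, Finset.sum_sub_distrib, Finset.sum_const, Finset.card_univ,
    Fintype.card_fin, nsmul_eq_mul]
  push_cast
  field_simp
  ring

lemma projD_neg (x : Fin (n + 1) → ℝ) : projD n (-x) = -projD n x := by
  ext i
  simp only [projD, Ssum_neg, Pi.neg_apply]
  ring

lemma projD_sub (x y : Fin (n + 1) → ℝ) : projD n (x - y) = projD n x - projD n y := by
  ext i
  simp only [projD, Ssum_sub, Pi.sub_apply]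
  ring

lemma sum_sq_projD (x : Fin (n + 1) → ℝ) :
    ∑ i, projD n x i ^ 2 = ∑ i, x i ^ 2 - Ssum n x ^ 2 / ((n : ℝ) + 1) := by
  simp only [projD, Ssum, sub_sq, Finset.sum_add_distrib, Finset.sum_sub_distrib,
    ← Finset.sum_mul, ← Finset.mul_sum, Finset.sum_const, Finset.card_univ, Fintype.card_fin,
    nsmul_eq_mul]
  push_cast
  field_simp
  ring

lemma norm_projD_le (x : Fin (n + 1) → ℝ) : ‖projD n x‖ ≤ √((n : ℝ) + 1) * ‖x‖ := by
  refine (pi_norm_le_iff_of_nonneg (by positivity)).2 fun i => ?_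
  rw [← Real.sqrt_sq (norm_nonneg x), ← Real.sqrt_mul (by positivity)]
  refine Real.abs_le_sqrt ?_
  calc projD n x i ^ 2 ≤ ∑ k, projD n x k ^ 2 :=
        Finset.single_le_sum (fun k _ => sq_nonneg (projD n x k)) (Finset.mem_univ i)
    _ ≤ ∑ k, x k ^ 2 := by
        rw [sum_sq_projD]
        exact sub_le_self _ (by positivity)
    _ ≤ ∑ _k : Fin (n + 1), ‖x‖ ^ 2 := Finset.sum_le_sum fun k _ => by
        rw [← sq_abs]
        exact pow_le_pow_left₀ (abs_nonneg _) (abs_apply_le_norm x k) 2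
    _ = ((n : ℝ) + 1) * ‖x‖ ^ 2 := by simp

lemma norm_projD_le_Ssum {x : Fin (n + 1) → ℝ} (hx : ∀ i, 0 ≤ x i) :
    ‖projD n x‖ ≤ Ssum n x := by
  have hS : 0 ≤ Ssum n x := Finset.sum_nonneg fun i _ => hx i
  have hmean : Ssum n x / ((n : ℝ) + 1) ≤ Ssum n x :=
    div_le_self hS (by linarith [(n.cast_nonneg : (0 : ℝ) ≤ n)])
  refine (pi_norm_le_iff_of_nonneg hS).2 fun i => abs_le.2 ⟨?_, ?_⟩ <;>
    simp only [projD] <;>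
    linarith [hx i, apply_le_Ssum hx i, div_nonneg hS (by positivity : (0 : ℝ) ≤ n + 1)]

end projD

noncomputable def blend (N C s u : ℝ) : ℝ := (1 - |s| / N) * u + C * (s / N)

section blend

variable {N C s t u v : ℝ}

lemma blend_neg : blend N C (-s) (-u) = -blend N C s u := by
  simp only [blend, abs_neg]
  ring

lemma blend_mono {K : ℝ} (hN : 0 < N) (hK : 0 ≤ K) (hC : 1 + N * K ≤ C) (hst : s ≤ t)
    (htN : |t| ≤ N) (hu : |u| ≤ 1) (huv : u - v ≤ K * (t - s)) :
    blend N C s u ≤ blend N C t v := by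
  have habs : |(|s| - |t|) * u| ≤ t - s := by
    rw [abs_mul]
    calc |(|s| - |t|)| * |u| ≤ |s - t| * 1 :=
          mul_le_mul (abs_abs_sub_abs_le_abs_sub s t) hu (abs_nonneg u) (abs_nonneg _)
      _ = t - s := by rw [mul_one, abs_sub_comm, abs_of_nonneg (sub_nonneg.2 hst)]
  have hloss : (N - |t|) * (u - v) ≤ N * (K * (t - s)) :=
    calc (N - |t|) * (u - v) ≤ (N - |t|) * (K * (t - s)) :=
          mul_le_mul_of_nonneg_left huv (by linarith)
      _ ≤ N * (K * (t - s)) :=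
          mul_le_mul_of_nonneg_right (by linarith [abs_nonneg t])
            (mul_nonneg hK (by linarith))
  have hgain : 0 ≤ (C - (1 + N * K)) * (t - s) :=
    mul_nonneg (sub_nonneg.2 hC) (sub_nonneg.2 hst)
  have key : 0 ≤ (N - |t|) * v + C * t - ((N - |s|) * u + C * s) := by
    nlinarith [(abs_le.1 habs).1]
  have hdiff : blend N C t v - blend N C s u =
      ((N - |t|) * v + C * t - ((N - |s|) * u + C * s)) / N := by
    simp only [blend]
    field_simp
  rw [← sub_nonneg, hdiff]
  exact div_nonneg key hN.le

lemma abs_blend_sub_le {L e : ℝ} (hN : 0 < N) (hC : 0 ≤ C) (hsN : |s| ≤ N) (hv : |v| ≤ 1)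
    (hst : |s - t| ≤ N * e) (huv : |u - v| ≤ L) :
    |blend N C s u - blend N C t v| ≤ L + (1 + C) * e := by
  have hw : |1 - |s| / N| ≤ 1 := by
    have := (div_le_one₀ hN).2 hsN
    rw [abs_le]
    constructor <;> linarith [div_nonneg (abs_nonneg s) hN.le]
  have hst' : |s - t| / N ≤ e := by rwa [div_le_iff₀' hN]
  have hdiff : blend N C s u - blend N C t v =
      (1 - |s| / N) * (u - v) + (|t| - |s|) / N * v + C * ((s - t) / N) := by
    simp only [blend]
    ring
  rw [hdiff]
  calc _ ≤ |(1 - |s| / N) * (u - v)| + |(|t| - |s|) / N * v| + |C * ((s - t) / N)| :=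
        abs_add_three _ _ _
    _ ≤ 1 * L + e * 1 + C * e := by
        simp only [abs_mul, abs_div, abs_of_pos hN, abs_of_nonneg hC]
        gcongr
        · exact (div_nonneg (abs_nonneg _) hN.le).trans hst'
        · refine le_trans ?_ hst'
          rw [abs_sub_comm s t]
          exact div_le_div_of_nonneg_right (abs_abs_sub_abs_le_abs_sub t s) hN.le
    _ = L + (1 + C) * e := by ring

end blend

theorem stmt13_general (n m : ℕ) (K C : ℝ) (hK : 0 ≤ K)
    (hC : 1 + ((n : ℝ) + 1) * K ≤ C)
    (H : (Fin (n + 1) → ℝ) → Fin m → ℝ)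
    (hHmap : ∀ z : Fin (n + 1) → ℝ, Ssum n z = 0 → ∀ j, H z j ∈ Icc (-1:ℝ) 1)
    (hHlip : ∀ z w : Fin (n + 1) → ℝ, Ssum n z = 0 → Ssum n w = 0 →
      ‖H z - H w‖ ≤ K * ‖z - w‖)
    (hHodd : ∀ z : Fin (n + 1) → ℝ, Ssum n z = 0 → H (-z) = -(H z))
    (F' : (Fin (n + 1) → ℝ) → Fin m → ℝ)
    (hF' : ∀ x, F' x = fun j : Fin m =>
      (1 - |Ssum n x| / ((n : ℝ) + 1)) * H (projD n x) j + C * (Ssum n x / ((n : ℝ) + 1))) :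
    (∀ x : Fin (n + 1) → ℝ, (∀ i, x i ∈ Icc (-1:ℝ) 1) → F' (-x) = -(F' x)) ∧
    (∀ x y : Fin (n + 1) → ℝ, (∀ i, x i ∈ Icc (-1:ℝ) 1) → (∀ i, y i ∈ Icc (-1:ℝ) 1) →
      (∀ i, x i ≤ y i) → ∀ j, F' x j ≤ F' y j) ∧
    (∀ x y : Fin (n + 1) → ℝ, (∀ i, x i ∈ Icc (-1:ℝ) 1) → (∀ i, y i ∈ Icc (-1:ℝ) 1) →
      ‖F' x - F' y‖ ≤ (1 + Real.sqrt ((n : ℝ) + 1) * K + C) * ‖x - y‖) := by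
  have hN : (0 : ℝ) < n + 1 := by positivity
  have hC0 : 0 ≤ C := by linarith [mul_nonneg hN.le hK]
  have hF'blend : ∀ x j, F' x j = blend ((n : ℝ) + 1) C (Ssum n x) (H (projD n x) j) :=
    fun x j => by rw [hF']; rfl
  have hHbound : ∀ x j, |H (projD n x) j| ≤ 1 := fun x j =>
    abs_le.2 (hHmap _ (Ssum_projD x) j)
  have hHproj : ∀ x y j, |H (projD n x) j - H (projD n y) j| ≤ K * ‖projD n (x - y)‖ :=
    fun x y j => by
      rw [projD_sub]
      exact (abs_apply_le_norm _ j).trans (hHlip _ _ (Ssum_projD x) (Ssum_projD y))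
  have hSbound : ∀ x, (∀ i, x i ∈ Icc (-1 : ℝ) 1) → |Ssum n x| ≤ n + 1 := fun x hx =>
    (abs_Ssum_le x).trans (mul_le_of_le_one_right hN.le (norm_le_one_of_forall_mem_Icc hx))
  refine ⟨fun x _ => ?odd, fun x y _ hy hxy j => ?mono, fun x y hx _ => ?lipschitz⟩
  case odd =>
    ext j
    rw [Pi.neg_apply, hF'blend, hF'blend, Ssum_neg, projD_neg, hHodd _ (Ssum_projD x),
      Pi.neg_apply, blend_neg]
  case mono =>
    rw [hF'blend, hF'blend]
    refine blend_mono hN hK hC (Ssum_mono hxy) (hSbound y hy) (hHbound x j) ?_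
    calc _ ≤ K * ‖projD n (x - y)‖ := (le_abs_self _).trans (hHproj x y j)
      _ = K * ‖projD n (y - x)‖ := by rw [← norm_neg, ← projD_neg, neg_sub]
      _ ≤ K * (Ssum n y - Ssum n x) := by
        rw [← Ssum_sub]
        gcongr
        exact norm_projD_le_Ssum fun i => sub_nonneg.2 (hxy i)
  case lipschitz =>
    refine (pi_norm_le_iff_of_nonneg (by positivity)).2 fun j => ?_
    rw [Real.norm_eq_abs, Pi.sub_apply, hF'blend, hF'blend]
    refine (abs_blend_sub_le hN hC0 (hSbound x hx) (hHbound y j)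
      (by rw [← Ssum_sub]; exact abs_Ssum_le _)
      ((hHproj x y j).trans (mul_le_mul_of_nonneg_left (norm_projD_le _) hK))).trans_eq ?_
    ring

/-- Monotone extension lemma: if `H` on the hyperplane `{S = 0}` takes values in `[−1,1]^m`,
is `K`-Lipschitz (sup norms) and odd, and `C ≥ 1 + (n+1)·K`, then
`F'(x) = (1 − |S(x)|/(n+1))·H(Π(x)) + C·(S(x)/(n+1))·𝟙_m` satisfies:
(i) `F'(−x) = −F'(x)`; (ii) `F'` is monotone on `[−1,1]^{n+1}`;
(iii) `F'` is `(1 + √(n+1)·K + C)`-Lipschitz on `[−1,1]^{n+1}`. -/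
theorem stmt13 (n m : ℕ) (hn : 1 ≤ n) (hm : 1 ≤ m) (K C : ℝ) (hK : 0 ≤ K)
    (hC : 1 + ((n : ℝ) + 1) * K ≤ C)
    (H : (Fin (n + 1) → ℝ) → Fin m → ℝ)
    (hHmap : ∀ z : Fin (n + 1) → ℝ, Ssum n z = 0 → ∀ j, H z j ∈ Icc (-1:ℝ) 1)
    (hHlip : ∀ z w : Fin (n + 1) → ℝ, Ssum n z = 0 → Ssum n w = 0 →
      ‖H z - H w‖ ≤ K * ‖z - w‖)
    (hHodd : ∀ z : Fin (n + 1) → ℝ, Ssum n z = 0 → H (-z) = -(H z))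
    (F' : (Fin (n + 1) → ℝ) → Fin m → ℝ)
    (hF' : ∀ x, F' x = fun j : Fin m =>
      (1 - |Ssum n x| / ((n : ℝ) + 1)) * H (projD n x) j + C * (Ssum n x / ((n : ℝ) + 1))) :
    (∀ x : Fin (n + 1) → ℝ, (∀ i, x i ∈ Icc (-1:ℝ) 1) → F' (-x) = -(F' x)) ∧
    (∀ x y : Fin (n + 1) → ℝ, (∀ i, x i ∈ Icc (-1:ℝ) 1) → (∀ i, y i ∈ Icc (-1:ℝ) 1) →
      (∀ i, x i ≤ y i) → ∀ j, F' x j ≤ F' y j) ∧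
    (∀ x y : Fin (n + 1) → ℝ, (∀ i, x i ∈ Icc (-1:ℝ) 1) → (∀ i, y i ∈ Icc (-1:ℝ) 1) →
      ‖F' x - F' y‖ ≤ (1 + Real.sqrt ((n : ℝ) + 1) * K + C) * ‖x - y‖) :=
  stmt13_general n m K C hK hC H hHmap hHlip hHodd F' hF'
end
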